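/- arXiv:2005.06329 — 3 statements merged into one kernel-verified Lean document; each statement's English description precedes it below -/
import Mathlib

section
/- For every k ∈ ℕ and every binary string S, every factor of φ(S) of length 2k+4 contains at most three occurrences of the letter 1. -/
/-- Hamming distance between two (equal-length) strings:
the number of positions where they differ. -/
def ham : List Bool → List Bool → ℕ
  | x :: U, y :: V => (if x = y then 0 else 1) + ham U V
  | _, _ => 0

/-- The morphism `φ`: `φ(0) = 0^{2k+4} 1010 0^{2k+4}` and `φ(1) = 0^{2k+4} 1011 0^{2k+4}`,
with `0 ↦ false`, `1 ↦ true`. -/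
def phi (k : ℕ) (S : List Bool) : List Bool :=
  S.flatMap fun x =>
    List.replicate (2 * k + 4) false ++ [true, false, true, x] ++
      List.replicate (2 * k + 4) false

/-- `γ(S) = 1^{2k+4} · φ(S)`. -/
def gamma (k : ℕ) (S : List Bool) : List Bool :=
  List.replicate (2 * k + 4) true ++ phi k S

/-!
Every image block starts and ends with `2k + 4` zeros, so a factor of length at most `2k + 4`
either lies inside one block, which carries at most three ones, or straddles the border of two
consecutive blocks, where it only sees the zero padding.
-/

namespace List

variable {α β : Type*}

def padFlatMap (n : ℕ) (z : β) (m : α → List β) (S : List α) : List β :=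
  S.flatMap fun a => replicate n z ++ m a ++ replicate n z

theorem prefix_replicate_of_prefix_padFlatMap {n : ℕ} {z : β} {m : α → List β} {S : List α}
    {X : List β} (hX : X <+: padFlatMap n z m S) (hlen : X.length ≤ n) :
    X <+: replicate n z := by
  cases S with
  | nil => simp_all [padFlatMap]
  | cons a S =>
    have hpre : replicate n z <+: padFlatMap n z m (a :: S) := by
      simp [padFlatMap, append_assoc]
    exact prefix_of_prefix_length_le hX hpre (by simpa using hlen)

theorem count_eq_zero_of_infix_replicate [BEq β] [LawfulBEq β] {n : ℕ} {z b : β}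
    (hbz : b ≠ z) {X : List β} (hX : X <:+: replicate n z) : X.count b = 0 :=
  Nat.eq_zero_of_le_zero <|
    (hX.sublist.count_le b).trans_eq (by simp [count_replicate, hbz.symm])

theorem count_le_of_infix_padFlatMap [BEq β] [LawfulBEq β] {n c : ℕ} {z b : β} (hbz : b ≠ z)
    {m : α → List β} (hm : ∀ a, (m a).count b ≤ c) (S : List α) {X : List β}
    (hX : X <:+: padFlatMap n z m S) (hlen : X.length ≤ n) : X.count b ≤ c := by
  induction S with
  | nil => simp_all [padFlatMap]
  | cons a S ih =>
    rw [padFlatMap, flatMap_cons, ← padFlatMap, infix_append_iff] at hX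
    rcases hX with hblock | hrest | ⟨X₁, X₂, rfl, h₁, h₂⟩
    · calc X.count b ≤ (replicate n z ++ m a ++ replicate n z).count b :=
            hblock.sublist.count_le b
        _ = (m a).count b := by simp [count_replicate, hbz.symm]
        _ ≤ c := hm a
    · exact ih hrest
    · rw [length_append] at hlen
      have hsuf : X₁ <:+ replicate n z :=
        suffix_of_suffix_length_le h₁ (suffix_append _ _) (by rw [length_replicate]; omega)
      have hpre : X₂ <+: replicate n z :=
        prefix_replicate_of_prefix_padFlatMap h₂ (by omega)
      simp [count_eq_zero_of_infix_replicate hbz hsuf.isInfix,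
        count_eq_zero_of_infix_replicate hbz hpre.isInfix]

end List

theorem stmt1 (k : ℕ) (S X : List Bool)
    (hX : X <:+: phi k S) (hlen : X.length = 2 * k + 4) :
    X.count true ≤ 3 :=
  List.count_le_of_infix_padFlatMap (by decide) (fun a => by cases a <;> decide) S hX hlen.le
end

section
/- Let k ∈ ℕ, let S_1, …, S_m (m ≥ 2) be binary strings of length ℓ ≥ 1, and let T = γ(S_1)·γ(S_2)⋯γ(S_m). If S is a binary string of length ℓ with Ham(S, S_i) ≤ k for all i = 1, …, m, then C = 1^{2k+4}·φ(S) = γ(S) is a k-approximate cover of T under the Hamming distance. -/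
/-- `C` is a `k`-approximate cover of `T` under the Hamming distance: `|C| < |T|` and every
position `t` of `T` is covered by a `k`-approximate occurrence of `C` in `T`. -/
def IsApproxCover (k : ℕ) (C T : List Bool) : Prop :=
  C.length < T.length ∧
    ∀ t < T.length, ∃ i, i + C.length ≤ T.length ∧
      ham C ((T.drop i).take C.length) ≤ k ∧ i ≤ t ∧ t < i + C.length

/-!
Both `γ(S)` and every block `γ(S_i)` of `T` have length `2k + 4 + ℓ(4k + 12)`, so the blocks
of `T` are aligned with possible occurrences of `γ(S)` and tile `T`. Since `γ` only spreads the
letters of its argument out between fixed padding, `Ham(γ(S), γ(S_i)) = Ham(S, S_i) ≤ k`, so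
every block is a `k`-approximate occurrence; `m ≥ 2` makes `γ(S)` strictly shorter than `T`.
-/

lemma ham_self (A : List Bool) : ham A A = 0 := by
  induction A with
  | nil => rfl
  | cons x A ih => simp [ham, ih]

lemma ham_append {A A' : List Bool} (B B' : List Bool) (h : A.length = A'.length) :
    ham (A ++ B) (A' ++ B') = ham A A' + ham B B' := by
  induction A generalizing A' with
  | nil => cases A' <;> simp_all [ham]
  | cons x A ih =>
    cases A' with
    | nil => simp at h
    | cons y A' =>
      simp only [List.cons_append, ham, ih (Nat.succ.inj h)]
      ring

lemma phi_cons (k : ℕ) (x : Bool) (S : List Bool) :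
    phi k (x :: S) =
      (List.replicate (2 * k + 4) false ++ [true, false, true]) ++
        (x :: List.replicate (2 * k + 4) false) ++ phi k S := by
  simp [phi]

lemma length_phi (k : ℕ) (S : List Bool) : (phi k S).length = S.length * (4 * k + 12) := by
  induction S with
  | nil => simp [phi]
  | cons x S ih =>
    simp only [phi_cons, List.length_append, List.length_cons, List.length_replicate,
      List.length_nil, ih]
    ring

lemma length_gamma (k : ℕ) (S : List Bool) :
    (gamma k S).length = 2 * k + 4 + S.length * (4 * k + 12) := by
  simp [gamma, length_phi]

lemma ham_phi (k : ℕ) {S S' : List Bool} (h : S.length = S'.length) :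
    ham (phi k S) (phi k S') = ham S S' := by
  induction S generalizing S' with
  | nil => cases S' <;> simp_all [phi, ham]
  | cons x S ih =>
    cases S' with
    | nil => simp at h
    | cons y S' =>
      rw [phi_cons, phi_cons, ham_append _ _ (by simp), ham_append _ _ (by simp),
        ih (Nat.succ.inj h)]
      simp [ham, ham_self]

lemma ham_gamma (k : ℕ) {S S' : List Bool} (h : S.length = S'.length) :
    ham (gamma k S) (gamma k S') = ham S S' := by
  rw [gamma, gamma, ham_append _ _ (by simp), ham_self, ham_phi k h, zero_add]

section UniformBlocks

variable {α : Type*} {L : ℕ} {Ls : List (List α)}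

lemma length_flatten_of_forall_length_eq (h : ∀ A ∈ Ls, A.length = L) :
    Ls.flatten.length = Ls.length * L := by
  rw [List.length_flatten, List.map_congr_left h, List.map_const', List.sum_replicate,
    smul_eq_mul]

lemma take_drop_flatten_of_forall_length_eq (h : ∀ A ∈ Ls, A.length = L) {j : ℕ}
    (hj : j < Ls.length) : (Ls.flatten.drop (j * L)).take L = Ls[j] := by
  induction Ls generalizing j with
  | nil => simp at hj
  | cons A Ls ih =>
    have hA : A.length = L := h A List.mem_cons_self
    cases j with
    | zero => simp [hA]
    | succ j =>
      have hshift : (j + 1) * L = A.length + j * L := by rw [hA, Nat.succ_mul, add_comm]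
      rw [List.flatten_cons, hshift, ← List.drop_drop, List.drop_left]
      exact ih (fun B hB => h B (List.mem_cons_of_mem A hB)) (Nat.succ_lt_succ_iff.1 hj)

end UniformBlocks

theorem isApproxCover_flatten (k : ℕ) (C : List Bool) (blocks : List (List Bool))
    (hC : 0 < C.length) (htwo : 2 ≤ blocks.length)
    (hlen : ∀ B ∈ blocks, B.length = C.length) (hham : ∀ B ∈ blocks, ham C B ≤ k) :
    IsApproxCover k C blocks.flatten := by
  rw [IsApproxCover, length_flatten_of_forall_length_eq hlen]
  set L := C.length
  refine ⟨lt_of_lt_of_le (by omega) (Nat.mul_le_mul_right L htwo), fun t ht => ?_⟩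
  have hj : t / L < blocks.length := Nat.div_lt_of_lt_mul (by rwa [mul_comm])
  refine ⟨t / L * L, ?_, ?_, Nat.div_mul_le_self t L, Nat.lt_div_mul_add hC⟩
  · calc t / L * L + L = (t / L + 1) * L := by ring
      _ ≤ blocks.length * L := Nat.mul_le_mul_right L hj
  · rw [take_drop_flatten_of_forall_length_eq hlen hj]
    exact hham _ (List.getElem_mem hj)

theorem stmt5_general (k ℓ m : ℕ) (hm : 2 ≤ m)
    (Ss : List (List Bool)) (hSs : Ss.length = m)
    (hlen : ∀ Si ∈ Ss, Si.length = ℓ)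
    (T : List Bool) (hT : T = (Ss.map (gamma k)).flatten)
    (S : List Bool) (hS : S.length = ℓ)
    (hcons : ∀ Si ∈ Ss, ham S Si ≤ k) :
    IsApproxCover k (gamma k S) T := by
  subst hT
  refine isApproxCover_flatten k _ _ (by simp [length_gamma]) (by simpa [hSs]) ?_ ?_ <;>
    simp only [List.mem_map, forall_exists_index, and_imp, forall_apply_eq_imp_iff₂]
  · intro Si hSi
    rw [length_gamma, length_gamma, hS, hlen Si hSi]
  · intro Si hSi
    rw [ham_gamma k (by rw [hS, hlen Si hSi])]
    exact hcons Si hSi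

theorem stmt5 (k ℓ m : ℕ) (hm : 2 ≤ m) (hℓ : 1 ≤ ℓ)
    (Ss : List (List Bool)) (hSs : Ss.length = m)
    (hlen : ∀ Si ∈ Ss, Si.length = ℓ)
    (T : List Bool) (hT : T = (Ss.map (gamma k)).flatten)
    (S : List Bool) (hS : S.length = ℓ)
    (hcons : ∀ Si ∈ Ss, ham S Si ≤ k) :
    IsApproxCover k (gamma k S) T :=
  stmt5_general k ℓ m hm Ss hSs hlen T hT S hS hcons
end

section
/- Let T be a string of length n, let M ≥ 1 be an integer, and call an index a special point if it is divisible by M. Let 0 ≤ a ≤ b < n and 0 ≤ a' ≤ b' < n be indices such that b − a ≥ M − 1 or b' − a' ≥ M − 1. Then there exist indices c and c' with a ≤ c ≤ b+1, a' ≤ c' ≤ b'+1, c − a < M, c' − a' < M, such that ed(T[a..b], T[a'..b']) = ed(T[a..c−1], T[a'..c'−1]) + ed(T[c..b], T[c'..b']) (where T[i..i−1] denotes the empty string), and such that at least one of the following holds: (M divides c and c ≤ b) or (M divides c' and c' ≤ b'). -/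
/-- Weighted edit-distance costs (Mathlib's former `Levenshtein.Cost`, removed since). -/
structure Levenshtein.Cost (α β δ : Type*) where
  delete : α → δ
  insert : β → δ
  substitute : α → β → δ

/-- Mathlib's former `Levenshtein.impl`, verbatim in meaning. -/
def Levenshtein.impl {α β δ : Type*} [AddZeroClass δ] [Min δ] (C : Levenshtein.Cost α β δ)
    (xs : List α) (y : β) (d : {r : List δ // 0 < r.length}) :
    {r : List δ // 0 < r.length} :=
  let ⟨ds, w⟩ := d
  xs.zip (ds.zip ds.tail) |>.foldr
    (init := ⟨[C.insert y + ds.getLast (List.ne_nil_of_length_pos w)], by simp⟩)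
    (fun ⟨x, d₀, d₁⟩ ⟨r, w⟩ =>
      ⟨min (C.delete x + r[0]) (min (C.insert y + d₀) (C.substitute x y + d₁)) :: r, by simp⟩)

/-- Mathlib's former `suffixLevenshtein`. -/
def suffixLevenshtein {α β δ : Type*} [AddZeroClass δ] [Min δ] (C : Levenshtein.Cost α β δ)
    (xs : List α) (ys : List β) : {r : List δ // 0 < r.length} :=
  ys.foldr
    (Levenshtein.impl C xs)
    (xs.foldr (init := ⟨[0], by simp⟩) (fun a ⟨r, w⟩ => ⟨(C.delete a + r[0]) :: r, by simp⟩))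

/-- Mathlib's former `levenshtein`: the weighted edit distance. -/
def levenshtein {α β δ : Type*} [AddZeroClass δ] [Min δ] (C : Levenshtein.Cost α β δ)
    (xs : List α) (ys : List β) : δ :=
  let ⟨r, w⟩ := suffixLevenshtein C xs ys
  r[0]

/-!
An optimal alignment of `T[a..b]` with `T[a'..b']` is a monotone lattice path through the
dynamic-programming table, and cutting it at any of its vertices splits the edit distance
additively. Let `s` and `s'` be the offsets of the first special points of the two windows. The path
leaves the rectangle `[0, s) × [0, s')` through column `s` or row `s'` (one of them lies inside the
table since one window has length at least `M`), and that exit vertex gives `(c - a, c' - a')`.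
-/

theorem List.getElem_zero_eq_headD {γ : Type*} {l : List γ} (h : 0 < l.length) (d : γ) :
    l[0] = l.headD d := by
  cases l
  · simp at h
  · rfl

section

variable {α β δ : Type*}

section Recurrence

variable [AddZeroClass δ] [Min δ] (C : Levenshtein.Cost α β δ)

theorem levenshtein_eq_headD (xs : List α) (ys : List β) :
    levenshtein C xs ys = (suffixLevenshtein C xs ys).1.headD 0 :=
  List.getElem_zero_eq_headD _ 0

theorem Levenshtein.impl_cons (x : α) (xs : List α) (y : β) (d₀ : δ)
    (d : {r : List δ // 0 < r.length}) (w : 0 < (d₀ :: d.1).length) :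
    (Levenshtein.impl C (x :: xs) y ⟨d₀ :: d.1, w⟩).1 =
      min (C.delete x + (Levenshtein.impl C xs y d).1.headD 0)
          (min (C.insert y + d₀) (C.substitute x y + d.1.headD 0)) ::
        (Levenshtein.impl C xs y d).1 := by
  obtain ⟨_ | ⟨d₁, ds⟩, hd⟩ := d
  · simp at hd
  show _ :: _ = _ :: _
  rw [List.getElem_zero_eq_headD]
  rfl

theorem suffixLevenshtein_nil (ys : List β) :
    (suffixLevenshtein C [] ys).1 = [levenshtein C [] ys] := by
  induction ys with
  | nil => rfl
  | cons y ys ih =>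
    have h : (suffixLevenshtein C [] (y :: ys)).1 = [C.insert y + levenshtein C [] ys] := by
      show [C.insert y + (suffixLevenshtein C [] ys).1.getLast _] = _
      simp only [ih, List.getLast_singleton]
    rw [levenshtein_eq_headD, h, List.headD_cons]

theorem suffixLevenshtein_cons (x : α) (xs : List α) (ys : List β) :
    (suffixLevenshtein C (x :: xs) ys).1 =
      levenshtein C (x :: xs) ys :: (suffixLevenshtein C xs ys).1 := by
  induction ys with
  | nil => rfl
  | cons y ys ih =>
    have hs : suffixLevenshtein C (x :: xs) ys =
        ⟨levenshtein C (x :: xs) ys :: (suffixLevenshtein C xs ys).1, by simp⟩ := Subtype.ext ih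
    rw [levenshtein_eq_headD]
    change (Levenshtein.impl C (x :: xs) y (suffixLevenshtein C (x :: xs) ys)).1 =
      (Levenshtein.impl C (x :: xs) y (suffixLevenshtein C (x :: xs) ys)).1.headD 0 ::
        (Levenshtein.impl C xs y (suffixLevenshtein C xs ys)).1
    rw [hs, Levenshtein.impl_cons]
    rfl

@[simp]
theorem levenshtein_nil_nil : levenshtein C [] [] = 0 := rfl

@[simp]
theorem levenshtein_nil_cons (y : β) (ys : List β) :
    levenshtein C [] (y :: ys) = C.insert y + levenshtein C [] ys := by
  rw [levenshtein_eq_headD]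
  change ([C.insert y + (suffixLevenshtein C [] ys).1.getLast _] : List δ).headD 0 = _
  simp only [suffixLevenshtein_nil, List.getLast_singleton, List.headD_cons]

@[simp]
theorem levenshtein_cons_nil (x : α) (xs : List α) :
    levenshtein C (x :: xs) [] = C.delete x + levenshtein C xs [] :=
  rfl

@[simp]
theorem levenshtein_cons_cons (x : α) (xs : List α) (y : β) (ys : List β) :
    levenshtein C (x :: xs) (y :: ys) =
      min (C.delete x + levenshtein C xs (y :: ys))
        (min (C.insert y + levenshtein C (x :: xs) ys)
          (C.substitute x y + levenshtein C xs ys)) := by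
  have hs : suffixLevenshtein C (x :: xs) ys =
      ⟨levenshtein C (x :: xs) ys :: (suffixLevenshtein C xs ys).1, by simp⟩ :=
    Subtype.ext (suffixLevenshtein_cons C x xs ys)
  rw [levenshtein_eq_headD]
  change (Levenshtein.impl C (x :: xs) y (suffixLevenshtein C (x :: xs) ys)).1.headD 0 = _
  rw [hs, Levenshtein.impl_cons, List.headD_cons]
  simp only [levenshtein_eq_headD]
  rfl

def IsLevenshteinSplit (C : Levenshtein.Cost α β δ)
    (xs : List α) (ys : List β) (i j : ℕ) : Prop :=
  levenshtein C xs ys =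
    levenshtein C (xs.take i) (ys.take j) + levenshtein C (xs.drop i) (ys.drop j)

end Recurrence

section LinearOrder

variable [AddZeroClass δ] [LinearOrder δ] (C : Levenshtein.Cost α β δ)

theorem levenshtein_cons_left_le (x : α) (xs : List α) (ys : List β) :
    levenshtein C (x :: xs) ys ≤ C.delete x + levenshtein C xs ys := by
  cases ys with
  | nil => simp
  | cons y ys => simp

theorem levenshtein_cons_right_le (xs : List α) (y : β) (ys : List β) :
    levenshtein C xs (y :: ys) ≤ C.insert y + levenshtein C xs ys := by
  cases xs with
  | nil => simp
  | cons x xs => simp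

theorem levenshtein_cons_cons_le (x : α) (xs : List α) (y : β) (ys : List β) :
    levenshtein C (x :: xs) (y :: ys) ≤ C.substitute x y + levenshtein C xs ys := by
  simp

end LinearOrder

variable [AddCommMonoid δ] [LinearOrder δ] [IsOrderedAddMonoid δ] (C : Levenshtein.Cost α β δ)

theorem levenshtein_append_le (xs₁ xs₂ : List α) (ys₁ ys₂ : List β) :
    levenshtein C (xs₁ ++ xs₂) (ys₁ ++ ys₂) ≤
      levenshtein C xs₁ ys₁ + levenshtein C xs₂ ys₂ := by
  induction xs₁ generalizing ys₁ with
  | nil =>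
    induction ys₁ with
    | nil => simp
    | cons y ys₁ ih =>
      calc levenshtein C xs₂ (y :: (ys₁ ++ ys₂))
          ≤ C.insert y + levenshtein C ([] ++ xs₂) (ys₁ ++ ys₂) :=
            levenshtein_cons_right_le C _ _ _
        _ ≤ C.insert y + (levenshtein C [] ys₁ + levenshtein C xs₂ ys₂) := by gcongr
        _ = levenshtein C [] (y :: ys₁) + levenshtein C xs₂ ys₂ := by simp [add_assoc]
  | cons x xs₁ ihx =>
    have hdelete : ∀ ys₁, levenshtein C (x :: xs₁ ++ xs₂) (ys₁ ++ ys₂) ≤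
        C.delete x + levenshtein C xs₁ ys₁ + levenshtein C xs₂ ys₂ := fun ys₁ =>
      calc levenshtein C (x :: (xs₁ ++ xs₂)) (ys₁ ++ ys₂)
          ≤ C.delete x + levenshtein C (xs₁ ++ xs₂) (ys₁ ++ ys₂) :=
            levenshtein_cons_left_le C _ _ _
        _ ≤ C.delete x + (levenshtein C xs₁ ys₁ + levenshtein C xs₂ ys₂) := by gcongr; exact ihx _
        _ = _ := (add_assoc _ _ _).symm
    induction ys₁ with
    | nil => simpa using hdelete []
    | cons y ys₁ ihy =>
      rw [levenshtein_cons_cons, ← min_add_add_right, ← min_add_add_right]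
      refine le_min (hdelete _) (le_min ?_ ?_)
      · calc levenshtein C (x :: (xs₁ ++ xs₂)) (y :: (ys₁ ++ ys₂))
            ≤ C.insert y + levenshtein C (x :: xs₁ ++ xs₂) (ys₁ ++ ys₂) :=
              levenshtein_cons_right_le C _ _ _
          _ ≤ C.insert y + (levenshtein C (x :: xs₁) ys₁ + levenshtein C xs₂ ys₂) := by gcongr
          _ = _ := (add_assoc _ _ _).symm
      · calc levenshtein C (x :: (xs₁ ++ xs₂)) (y :: (ys₁ ++ ys₂))
            ≤ C.substitute x y + levenshtein C (xs₁ ++ xs₂) (ys₁ ++ ys₂) :=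
              levenshtein_cons_cons_le C _ _ _ _
          _ ≤ C.substitute x y + (levenshtein C xs₁ ys₁ + levenshtein C xs₂ ys₂) := by
              gcongr; exact ihx _
          _ = _ := (add_assoc _ _ _).symm

theorem levenshtein_le_take_add_drop (xs : List α) (ys : List β) (i j : ℕ) :
    levenshtein C xs ys ≤
      levenshtein C (xs.take i) (ys.take j) + levenshtein C (xs.drop i) (ys.drop j) := by
  conv_lhs => rw [← List.take_append_drop i xs, ← List.take_append_drop j ys]
  exact levenshtein_append_le C _ _ _ _

theorem exists_isLevenshteinSplit_step {xs : List α} {ys : List β} (h : xs ≠ [] ∨ ys ≠ []) :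
    ∃ i j, i ≤ min 1 xs.length ∧ j ≤ min 1 ys.length ∧ 0 < i + j ∧
      IsLevenshteinSplit C xs ys i j := by
  match xs, ys with
  | [], [] => simp at h
  | [], y :: ys => exact ⟨0, 1, by simp, by simp, by simp, by simp [IsLevenshteinSplit]⟩
  | x :: xs, [] => exact ⟨1, 0, by simp, by simp, by simp, by simp [IsLevenshteinSplit]⟩
  | x :: xs, y :: ys =>
    have hcc := levenshtein_cons_cons C x xs y ys
    rcases min_choice (C.delete x + levenshtein C xs (y :: ys))
        (min (C.insert y + levenshtein C (x :: xs) ys)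
          (C.substitute x y + levenshtein C xs ys)) with hmin | hmin
    · exact ⟨1, 0, by simp, by simp, by simp, by simp [IsLevenshteinSplit, hcc.trans hmin]⟩
    rcases min_choice (C.insert y + levenshtein C (x :: xs) ys)
        (C.substitute x y + levenshtein C xs ys) with hmin' | hmin'
    · exact ⟨0, 1, by simp, by simp, by simp,
        by simp [IsLevenshteinSplit, hcc.trans (hmin.trans hmin')]⟩
    -- `levenshtein C [x] [y]` may be below the substitution cost, so this split is an inequality
    -- that subadditivity closes.
    · refine ⟨1, 1, by simp, by simp, by simp,
        le_antisymm (levenshtein_le_take_add_drop C _ _ _ _) ?_⟩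
      calc levenshtein C [x] [y] + levenshtein C xs ys
          ≤ C.substitute x y + levenshtein C [] [] + levenshtein C xs ys := by
            gcongr; exact levenshtein_cons_cons_le C x [] y []
        _ = levenshtein C (x :: xs) (y :: ys) := by
            rw [hcc, hmin, hmin', levenshtein_nil_nil, add_zero]

theorem IsLevenshteinSplit.add {C : Levenshtein.Cost α β δ} {xs : List α} {ys : List β}
    {i j k l : ℕ} (h₁ : IsLevenshteinSplit C xs ys i j)
    (h₂ : IsLevenshteinSplit C (xs.drop i) (ys.drop j) k l) :
    IsLevenshteinSplit C xs ys (i + k) (j + l) := by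
  refine le_antisymm (levenshtein_le_take_add_drop C _ _ _ _) ?_
  rw [h₁, h₂, ← add_assoc, List.take_add, List.take_add, List.drop_drop, List.drop_drop]
  gcongr
  exact levenshtein_append_le C _ _ _ _

theorem exists_isLevenshteinSplit_frontier (xs : List α) (ys : List β) (i₀ j₀ : ℕ)
    (h : i₀ ≤ xs.length ∨ j₀ ≤ ys.length) :
    ∃ i j, i ≤ i₀ ∧ j ≤ j₀ ∧ i ≤ xs.length ∧ j ≤ ys.length ∧ (i = i₀ ∨ j = j₀) ∧
      IsLevenshteinSplit C xs ys i j := by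
  induction hn : xs.length + ys.length using Nat.strong_induction_on
      generalizing xs ys i₀ j₀ with
  | _ n ih =>
    by_cases h₀ : i₀ = 0 ∨ j₀ = 0
    · exact ⟨0, 0, by omega, by omega, by omega, by omega, by omega,
        by simp [IsLevenshteinSplit]⟩
    have hne : xs ≠ [] ∨ ys ≠ [] := by
      rw [← List.length_pos_iff, ← List.length_pos_iff]
      omega
    obtain ⟨k, l, hk, hl, hkl, hstep⟩ := exists_isLevenshteinSplit_step C hne
    obtain ⟨i, j, hi, hj, hix, hjy, hhit, hsplit⟩ :=
      ih _ (by simp only [List.length_drop]; omega) (xs.drop k) (ys.drop l) (i₀ - k) (j₀ - l)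
        (by simp only [List.length_drop]; omega) rfl
    simp only [List.length_drop] at hix hjy
    exact ⟨k + i, l + j, by omega, by omega, by omega, by omega, by omega, hstep.add hsplit⟩

end

theorem Nat.exists_lt_dvd_add {M : ℕ} (hM : 0 < M) (a : ℕ) : ∃ p < M, M ∣ a + p := by
  have hdiv := Nat.div_add_mod (a + M - 1) M
  have hmod := Nat.mod_lt (a + M - 1) hM
  refine ⟨M * ((a + M - 1) / M) - a, by omega, ?_⟩
  rw [Nat.add_sub_cancel' (by omega)]
  exact Nat.dvd_mul_right M _

/-- `t` is the offset of the first multiple of `M` in the window `[a, a + len)`, or the sentinel `M`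
when the window contains none (which forces `len < M`). -/
theorem exists_special_offset {M : ℕ} (hM : 0 < M) (a len : ℕ) :
    ∃ t, (M ≤ len → t ≤ len) ∧ (t ≤ len → t < len ∧ M ∣ a + t) ∧
      ∀ i ≤ t, i ≤ len → i < M := by
  obtain ⟨p, hpM, hp⟩ := Nat.exists_lt_dvd_add hM a
  by_cases hlen : p < len
  · exact ⟨p, fun _ => hlen.le, fun _ => ⟨hlen, hp⟩, fun i hi _ => by omega⟩
  · exact ⟨M, by omega, by omega, fun i _ hi => by omega⟩

theorem stmt11_general {α : Type*} (C : Levenshtein.Cost α α ℝ)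
    (T : List α) (n : ℕ) (hn : T.length = n)
    (M : ℕ) (hM : 1 ≤ M)
    (a b a' b' : ℕ) (hab : a ≤ b) (hb : b < n) (hab' : a' ≤ b') (hb' : b' < n)
    (hbig : M - 1 ≤ b - a ∨ M - 1 ≤ b' - a') :
    ∃ c c', a ≤ c ∧ c ≤ b + 1 ∧ a' ≤ c' ∧ c' ≤ b' + 1 ∧ c - a < M ∧ c' - a' < M ∧
      levenshtein C ((T.drop a).take (b + 1 - a)) ((T.drop a').take (b' + 1 - a')) =
        levenshtein C ((T.drop a).take (c - a)) ((T.drop a').take (c' - a')) +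
          levenshtein C ((T.drop c).take (b + 1 - c)) ((T.drop c').take (b' + 1 - c')) ∧
      ((M ∣ c ∧ c ≤ b) ∨ (M ∣ c' ∧ c' ≤ b')) := by
  set xs := (T.drop a).take (b + 1 - a)
  set ys := (T.drop a').take (b' + 1 - a')
  have hxs : xs.length = b + 1 - a := by simp only [xs, List.length_take, List.length_drop]; omega
  have hys : ys.length = b' + 1 - a' := by simp only [ys, List.length_take, List.length_drop]; omega
  obtain ⟨s, hs_le, hs_special, hs_lt⟩ := exists_special_offset hM a (b + 1 - a)
  obtain ⟨s', hs'_le, hs'_special, hs'_lt⟩ := exists_special_offset hM a' (b' + 1 - a')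
  obtain ⟨i, j, hi, hj, hixs, hjys, hhit, hsplit⟩ :=
    exists_isLevenshteinSplit_frontier C xs ys s s' (by omega)
  rw [hxs] at hixs
  rw [hys] at hjys
  have hiM : i < M := hs_lt i hi hixs
  have hjM : j < M := hs'_lt j hj hjys
  refine ⟨a + i, a' + j, by omega, by omega, by omega, by omega, by omega, by omega, ?_, ?_⟩
  · simp only [IsLevenshteinSplit, xs, ys, List.take_take, List.drop_take, List.drop_drop,
      Nat.sub_sub, min_eq_left hixs, min_eq_left hjys] at hsplit
    simpa only [Nat.add_sub_cancel_left] using hsplit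
  · rcases hhit with rfl | rfl
    · obtain ⟨hlt, hdvd⟩ := hs_special hixs
      exact .inl ⟨hdvd, by omega⟩
    · obtain ⟨hlt, hdvd⟩ := hs'_special hjys
      exact .inr ⟨hdvd, by omega⟩

theorem stmt11 {α : Type*} (C : Levenshtein.Cost α α ℝ)
    (hdel : ∀ x, 0 ≤ C.delete x) (hins : ∀ x, 0 ≤ C.insert x)
    (hsub : ∀ x y, 0 ≤ C.substitute x y) (hrefl : ∀ x, C.substitute x x = 0)
    (T : List α) (n : ℕ) (hn : T.length = n)
    (M : ℕ) (hM : 1 ≤ M)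
    (a b a' b' : ℕ) (hab : a ≤ b) (hb : b < n) (hab' : a' ≤ b') (hb' : b' < n)
    (hbig : M - 1 ≤ b - a ∨ M - 1 ≤ b' - a') :
    ∃ c c', a ≤ c ∧ c ≤ b + 1 ∧ a' ≤ c' ∧ c' ≤ b' + 1 ∧ c - a < M ∧ c' - a' < M ∧
      levenshtein C ((T.drop a).take (b + 1 - a)) ((T.drop a').take (b' + 1 - a')) =
        levenshtein C ((T.drop a).take (c - a)) ((T.drop a').take (c' - a')) +
          levenshtein C ((T.drop c).take (b + 1 - c)) ((T.drop c').take (b' + 1 - c')) ∧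
      ((M ∣ c ∧ c ≤ b) ∨ (M ∣ c' ∧ c' ≤ b')) :=
  stmt11_general C T n hn M hM a b a' b' hab hb hab' hb' hbig
end
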